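/- arXiv:1601.01361 — 2 statements merged into one kernel-verified Lean document; each statement's English description precedes it below -/
import Mathlib

section
/- Every lattice (L, ‖·‖) over A = k[t] admits a reduced basis, i.e. an A-basis B such that ‖Σ_{b∈B} a_b b‖ = max_{b∈B}(deg(a_b) + ‖b‖) for all coefficients a_b ∈ A. -/
/-!
Norms of a lattice are discrete: each `L_{≤ v}` is a finite-dimensional `k`-space, and its
dimension jumps at every attained value `v`. So there is a nonzero `b` of minimal norm, and every
coset of `k[X] ∙ b` has a lift of minimal norm. The norm of minimal lifts is again a lattice norm
on `L ⧸ k[X] ∙ b`; the only nontrivial point, `‖a • z‖ = deg a + ‖z‖`, comes from division with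
remainder by `a` together with the minimality of `b`. By induction on the rank the quotient has a
reduced basis, and its minimal lifts together with `b` form a reduced basis of `L`.
-/

/-- The degree function on `A = k[t]`, with `deg 0 = -∞`, valued in `ℝ ∪ {-∞}`. -/
noncomputable def degA {k : Type*} [Field k] (a : Polynomial k) : WithBot ℝ :=
  WithBot.map (fun n : ℕ => (n : ℝ)) a.degree

open Polynomial Module

section Degree

variable {k : Type*} [Field k]

lemma degA_eq_bot_iff {a : k[X]} : degA a = ⊥ ↔ a = 0 := by
  rw [degA, WithBot.map_eq_bot_iff, degree_eq_bot]

lemma degA_C {c : k} (hc : c ≠ 0) : degA (C c) = 0 := by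
  simp [degA, degree_C hc]

lemma degA_lt_degA {p q : k[X]} (h : p.degree < q.degree) : degA p < degA q :=
  Nat.strictMono_cast.withBot_map h

end Degree

section Ultrametric

variable {M Γ : Type*} [AddCommGroup M] [LinearOrder Γ] {N : M → Γ}

theorem apply_add_eq_right_of_lt (hadd : ∀ x y, N (x + y) ≤ max (N x) (N y))
    (hneg : ∀ x, N (-x) = N x) {x y : M} (h : N x < N y) : N (x + y) = N y := by
  refine le_antisymm ((hadd x y).trans (max_le h.le le_rfl)) (le_of_not_gt fun hlt => ?_)
  have := hadd (-x) (x + y)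
  rw [neg_add_cancel_left, hneg] at this
  exact (this.trans_lt (max_lt h hlt)).false

theorem apply_sum_le_sup [OrderBot Γ] (hadd : ∀ x y, N (x + y) ≤ max (N x) (N y))
    (hzero : N 0 = ⊥) {ι : Type*} (s : Finset ι) (f : ι → M) :
    N (∑ i ∈ s, f i) ≤ s.sup fun i => N (f i) :=
  Finset.sum_induction f (fun x => N x ≤ s.sup fun i => N (f i))
    (fun _ _ hx hy => (hadd _ _).trans (max_le hx hy)) (hzero ▸ bot_le)
    fun _ hi => Finset.le_sup (f := fun i => N (f i)) hi

end Ultrametric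

theorem finrank_quotient_span_singleton_lt {R M : Type*} [CommRing R] [IsDomain R]
    [AddCommGroup M] [Module R M] [Module.Finite R M] [IsTorsionFree R M] {x : M} (hx : x ≠ 0) :
    finrank R (M ⧸ R ∙ x) < finrank R M := by
  rw [← (R ∙ x).finrank_quotient_add_finrank, Nat.lt_add_right_iff_pos]
  exact (linearIndependent_unique_iff
    (v := fun _ : Unit => (⟨x, Submodule.mem_span_singleton_self x⟩ : R ∙ x)) |>.2
    (by simpa using hx)).fintype_card_le_finrank

theorem Submodule.Quotient.mk_self_span_singleton {R M : Type*} [Ring R] [AddCommGroup M]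
    [Module R M] (x : M) : (Submodule.Quotient.mk x : M ⧸ R ∙ x) = 0 :=
  (Submodule.Quotient.mk_eq_zero _).2 (Submodule.mem_span_singleton_self x)

section LatticeNorm

variable (k : Type*) [Field k] {L : Type*} [AddCommGroup L] [Module k[X] L]

/-- Spanning suffices: the norm identity forces linear independence over `k[X]`. -/
def IsReducedBasis (N : L → WithBot ℝ) {n : ℕ} (b : Fin n → L) : Prop :=
  Submodule.span k[X] (Set.range b) = ⊤ ∧
    ∀ a : Fin n → k[X], N (∑ i, a i • b i) = Finset.univ.sup fun i => degA (a i) + N (b i)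

variable [Module k L]

structure IsLatticeNorm (N : L → WithBot ℝ) : Prop where
  add_le : ∀ x y, N (x + y) ≤ max (N x) (N y)
  smul : ∀ (a : k[X]) x, N (a • x) = degA a + N x
  eq_bot_iff : ∀ x, N x = ⊥ ↔ x = 0
  finite_ball : ∀ r : ℝ, ∃ S : Finset L, {x | N x ≤ r} ⊆ Submodule.span k (S : Set L)

namespace IsLatticeNorm

variable {k} {N : L → WithBot ℝ} (hN : IsLatticeNorm k N)
include hN

theorem apply_zero : N 0 = ⊥ := (hN.eq_bot_iff 0).2 rfl

theorem apply_neg (x : L) : N (-x) = N x := by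
  rw [← neg_one_smul k[X] x, hN.smul, ← C_1, ← C_neg, degA_C (neg_ne_zero.2 one_ne_zero), zero_add]

theorem apply_add_eq_right_of_lt {x y : L} (h : N x < N y) : N (x + y) = N y :=
  _root_.apply_add_eq_right_of_lt hN.add_le hN.apply_neg h

theorem apply_sum_le_sup {ι : Type*} (s : Finset ι) (f : ι → L) :
    N (∑ i ∈ s, f i) ≤ s.sup fun i => N (f i) :=
  _root_.apply_sum_le_sup hN.add_le hN.apply_zero s f

theorem isTorsionFree : IsTorsionFree k[X] L :=
  .of_smul_eq_zero fun a x h => by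
    have := (hN.eq_bot_iff _).2 h
    rwa [hN.smul, WithBot.add_eq_bot, degA_eq_bot_iff, hN.eq_bot_iff] at this

variable [IsScalarTower k k[X] L]

theorem apply_smul_of_ne_zero {c : k} (hc : c ≠ 0) (x : L) : N (c • x) = N x := by
  rw [← algebraMap_smul k[X] c x, algebraMap_eq, hN.smul, degA_C hc, zero_add]

/-- The space `L_{≤ v}`. -/
def ball (v : WithBot ℝ) : Submodule k L where
  carrier := {x | N x ≤ v}
  add_mem' hx hy := (hN.add_le _ _).trans (max_le hx hy)
  zero_mem' := show N 0 ≤ v by rw [hN.apply_zero]; exact bot_le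
  smul_mem' c x hx := show N (c • x) ≤ v by
    rcases eq_or_ne c 0 with rfl | hc
    · rw [zero_smul, hN.apply_zero]; exact bot_le
    · rwa [hN.apply_smul_of_ne_zero hc]

theorem mem_ball {v : WithBot ℝ} {x : L} : x ∈ hN.ball v ↔ N x ≤ v := Iff.rfl

theorem finiteDimensional_ball (v : WithBot ℝ) : FiniteDimensional k (hN.ball v) := by
  obtain ⟨r, hvr⟩ : ∃ r : ℝ, v ≤ r := by
    cases v with
    | bot => exact ⟨0, bot_le⟩
    | coe r => exact ⟨r, le_rfl⟩
  obtain ⟨S, hS⟩ := hN.finite_ball r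
  exact Submodule.finiteDimensional_of_le fun x hx => hS (hx.trans hvr)

/-- `dim L_{≤ w}` is strictly increasing in the attained values `w`. -/
theorem finite_range_inter_Iic (v : WithBot ℝ) : (Set.range N ∩ Set.Iic v).Finite := by
  have hmono : StrictMonoOn (fun w => finrank k (hN.ball w)) (Set.range N ∩ Set.Iic v) := by
    rintro _ - _ ⟨⟨y, rfl⟩, -⟩ hlt
    have := hN.finiteDimensional_ball (N y)
    exact Submodule.finrank_lt_finrank_of_lt <| SetLike.lt_iff_le_and_exists.2
      ⟨fun x hx => hx.trans hlt.le, y, hN.mem_ball.2 le_rfl, hlt.not_ge⟩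
  refine Set.Finite.of_finite_image ((Set.finite_Iic (finrank k (hN.ball v))).subset ?_) hmono.injOn
  rintro _ ⟨w, ⟨-, hw⟩, rfl⟩
  have := hN.finiteDimensional_ball v
  exact Submodule.finrank_mono fun x hx => (hN.mem_ball.1 hx).trans hw

theorem exists_isMinOn {S : Set L} (hS : S.Nonempty) : ∃ b ∈ S, IsMinOn N S b := by
  obtain ⟨x₀, hx₀⟩ := hS
  have hT : (N '' S ∩ Set.Iic (N x₀)).Finite :=
    (hN.finite_range_inter_Iic (N x₀)).subset
      (Set.inter_subset_inter_left _ (Set.image_subset_range _ _))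
  obtain ⟨_, ⟨⟨b, hb, rfl⟩, hbx₀⟩, hmin⟩ :=
    Set.exists_min_image _ id hT ⟨N x₀, ⟨x₀, hx₀, rfl⟩, Set.self_mem_Iic⟩
  refine ⟨b, hb, fun y hy => ?_⟩
  rcases le_total (N y) (N x₀) with h | h
  · exact hmin _ ⟨⟨y, hy, rfl⟩, h⟩
  · exact hbx₀.trans h

theorem exists_minimal_lift (P : Submodule k[X] L) :
    ∃ rep : L ⧸ P → L, (∀ z, Submodule.Quotient.mk (rep z) = z) ∧
      ∀ x, N (rep (Submodule.Quotient.mk x)) ≤ N x := by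
  have (z : L ⧸ P) : ∃ w ∈ P.mkQ ⁻¹' {z}, IsMinOn N (P.mkQ ⁻¹' {z}) w :=
    hN.exists_isMinOn (P.mkQ_surjective z)
  choose rep hrep hmin using this
  exact ⟨rep, hrep, fun x => hmin (P.mkQ x) rfl⟩

section Quotient

variable {b : L} {rep : L ⧸ (k[X] ∙ b) → L} (hrep : ∀ z, Submodule.Quotient.mk (rep z) = z)
  (hmin : ∀ x, N (rep (Submodule.Quotient.mk x)) ≤ N x)
include hrep hmin

omit [IsScalarTower k k[X] L] in
/-- Division with remainder writes `rep (a • z) = (c % a) • b + a • (rep z + (c / a) • b)`, and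
minimality of `b` makes the first summand strictly shorter than the second. -/
theorem apply_lift_smul (hb : IsMinOn N {x | x ≠ 0} b) (hb0 : b ≠ 0) (a : k[X])
    (z : L ⧸ (k[X] ∙ b)) : N (rep (a • z)) = degA a + N (rep z) := by
  refine le_antisymm (by simpa [hrep, hN.smul] using hmin (a • rep z)) ?_
  rcases eq_or_ne a 0 with rfl | ha
  · rw [degA_eq_bot_iff.2 rfl, WithBot.bot_add]; exact bot_le
  rcases eq_or_ne (rep z) 0 with hz | hz
  · rw [hz, hN.apply_zero, WithBot.add_bot]; exact bot_le
  obtain ⟨c, hc⟩ : ∃ c : k[X], c • b = rep (a • z) - a • rep z :=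
    Submodule.mem_span_singleton.1 <| (Submodule.Quotient.eq _).1 <| by
      rw [Submodule.Quotient.mk_smul, hrep, hrep]
  have hdecomp : rep (a • z) = (c % a) • b + a • (rep z + (c / a) • b) := by
    rw [← sub_add_cancel (rep (a • z)) (a • rep z), ← hc]
    conv_lhs => rw [← EuclideanDomain.div_add_mod c a]
    module
  have hmain : degA a + N (rep z) ≤ N (a • (rep z + (c / a) • b)) := by
    rw [hN.smul]
    gcongr
    simpa [hrep, Submodule.Quotient.mk_self_span_singleton] using hmin (rep z + (c / a) • b)
  have hrem : N ((c % a) • b) < degA a + N (rep z) := by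
    rw [hN.smul]
    calc degA (c % a) + N b < degA a + N b :=
          WithBot.add_lt_add_right (mt (hN.eq_bot_iff b).1 hb0) (degA_lt_degA (degree_mod_lt c ha))
      _ ≤ degA a + N (rep z) := by gcongr; exact hb hz
  rw [hdecomp, hN.apply_add_eq_right_of_lt (hrem.trans_le hmain)]
  exact hmain

theorem isLatticeNorm_comp_lift (hb : IsMinOn N {x | x ≠ 0} b) (hb0 : b ≠ 0) :
    IsLatticeNorm k (N ∘ rep) where
  add_le z w := by
    simpa [hrep] using (hmin (rep z + rep w)).trans (hN.add_le _ _)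
  smul := hN.apply_lift_smul hrep hmin hb hb0
  eq_bot_iff z := by
    refine ⟨fun h => ?_, fun h => ?_⟩
    · rw [← hrep z, (hN.eq_bot_iff _).1 h, Submodule.Quotient.mk_zero]
    · simpa [h, hN.apply_zero] using hmin 0
  finite_ball r := by
    classical
    obtain ⟨S, hS⟩ := hN.finite_ball r
    refine ⟨S.image (k[X] ∙ b).mkQ, fun z hz => ?_⟩
    simpa [hrep] using
      Submodule.apply_mem_span_image_of_mem_span ((k[X] ∙ b).mkQ.restrictScalars k) (hS hz)

omit [IsScalarTower k k[X] L] in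
theorem isReducedBasis_cons {n : ℕ} {b' : Fin n → L ⧸ (k[X] ∙ b)}
    (hb' : IsReducedBasis k (N ∘ rep) b') :
    IsReducedBasis k N (Fin.cons b (rep ∘ b') : Fin (n + 1) → L) := by
  constructor
  · rw [Fin.range_cons, Submodule.span_insert, ← Submodule.map_mkQ_eq_top, Submodule.map_span,
      ← Set.range_comp]
    simpa [Function.comp_def, hrep] using hb'.1
  intro a
  set y := ∑ i : Fin n, a i.succ • rep (b' i)
  set M := Finset.univ.sup fun i : Fin n => degA (a i.succ) + N (rep (b' i))
  have hy : N y ≤ M :=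
    (hN.apply_sum_le_sup _ _).trans (Finset.sup_mono_fun fun i _ => (hN.smul _ _).le)
  have hlower : M ≤ N (a 0 • b + y) := by
    have hq : (k[X] ∙ b).mkQ (a 0 • b + y) = ∑ i, a i.succ • b' i := by
      simp only [y, map_add, map_sum, map_smul, Submodule.mkQ_apply, hrep,
        Submodule.Quotient.mk_self_span_singleton, smul_zero, zero_add]
    have := hmin (a 0 • b + y)
    rwa [← Submodule.mkQ_apply, hq, ← Function.comp_apply (f := N), hb'.2] at this
  rw [Fin.sum_univ_succ, Fin.univ_succ, Finset.sup_cons, Finset.sup_map]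
  simp only [Fin.cons_zero, Fin.cons_succ, Function.comp_apply]
  change N (a 0 • b + y) = (degA (a 0) + N b) ⊔ M
  rcases lt_or_ge M (degA (a 0) + N b) with hlt | hle
  · rw [add_comm, hN.apply_add_eq_right_of_lt (by rw [hN.smul]; exact hy.trans_lt hlt), hN.smul,
      max_eq_left hlt.le]
  · rw [max_eq_right hle]
    exact le_antisymm ((hN.add_le _ _).trans (max_le (by rwa [hN.smul]) hy)) hlower

end Quotient

theorem exists_isReducedBasis [Module.Finite k[X] L] :
    ∃ (n : ℕ) (b : Fin n → L), IsReducedBasis k N b := by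
  induction hr : finrank k[X] L using Nat.strong_induction_on generalizing L with
  | _ r ih =>
  rcases subsingleton_or_nontrivial L with hL | hL
  · exact ⟨0, Fin.elim0, Subsingleton.elim _ _, fun a => by simp [hN.apply_zero]⟩
  obtain ⟨b, hb0, hb⟩ := hN.exists_isMinOn (exists_ne (0 : L))
  obtain ⟨rep, hrep, hmin⟩ := hN.exists_minimal_lift (k[X] ∙ b)
  have : IsTorsionFree k[X] L := hN.isTorsionFree
  obtain ⟨n, b', hb'⟩ := ih _ (hr ▸ finrank_quotient_span_singleton_lt hb0)
    (hN.isLatticeNorm_comp_lift hrep hmin hb hb0) rfl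
  exact ⟨n + 1, _, hN.isReducedBasis_cons hrep hmin hb'⟩

end IsLatticeNorm

end LatticeNorm

/-- Every lattice over `A = k[t]` admits a reduced basis. -/
theorem stmt8 {k : Type*} [Field k] {L : Type*} [AddCommGroup L]
    [Module (Polynomial k) L] [Module k L] [IsScalarTower k (Polynomial k) L]
    [Module.Finite (Polynomial k) L]
    (N : L → WithBot ℝ)
    (hadd : ∀ x y : L, N (x + y) ≤ max (N x) (N y))
    (hsmul : ∀ (a : Polynomial k) (x : L), N (a • x) = degA a + N x)
    (hzero : ∀ x : L, N x = ⊥ ↔ x = 0)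
    (hfin : ∀ r : ℝ, ∃ S : Finset L,
      {x : L | N x ≤ (r : ℝ)} ⊆ (Submodule.span k (S : Set L) : Set L)) :
    ∃ (n : ℕ) (b : Fin n → L),
      Submodule.span (Polynomial k) (Set.range b) = ⊤ ∧
      ∀ a : Fin n → Polynomial k,
        N (∑ i, a i • b i) = Finset.univ.sup (fun i => degA (a i) + N (b i)) :=
  IsLatticeNorm.exists_isReducedBasis ⟨hadd, hsmul, hzero, hfin⟩
end

section
/- (Hadamard's inequality for function field lattices) Let B be a basis of a normed space E over K = k(t). Then |d(B)| ≤ vol(B) - vol(E), where vol(B) = Σ_{b∈B} ‖b‖, vol(E) is the volume of any orthonormal basis of E, and |d(B)| is the degree of the determinant of the transition matrix from B to an orthonormal basis of E. -/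
/-!
Since `b'` is reduced, expanding `b i = ∑ j, T i j • b' j` gives `|T i j| + ‖b' j‖ ≤ ‖b i‖` for
all `i, j`. Every term of the Leibniz expansion of `det T` therefore has degree at most
`∑ ‖b i‖ - ∑ ‖b' j‖`, and by the ultrametric inequality for `|·|` so does their sum.
-/

open scoped Classical in
/-- The degree function `|·| = -v_∞` on `K = k(t)`, with `|0| = -∞`. -/
noncomputable def degK {k : Type*} [Field k] (a : RatFunc k) : WithBot ℝ :=
  if a = 0 then ⊥ else ((a.intDegree : ℝ) : WithBot ℝ)

open Finset

section degK

variable {k : Type*} [Field k]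

theorem degK_one : degK (1 : RatFunc k) = 0 := by simp [degK]

theorem degK_neg (a : RatFunc k) : degK (-a) = degK a := by
  by_cases ha : a = 0 <;> simp [degK, ha]

theorem degK_intCast_units (u : ℤˣ) : degK ((u : ℤ) : RatFunc k) = 0 := by
  rcases Int.units_eq_one_or u with rfl | rfl
  · simpa using degK_one
  · simpa [degK_neg] using degK_one

theorem degK_mul (a b : RatFunc k) : degK (a * b) = degK a + degK b := by
  by_cases ha : a = 0
  · simp [degK, ha]
  by_cases hb : b = 0
  · simp [degK, hb]
  simp only [degK, ha, hb, mul_ne_zero ha hb, if_false, RatFunc.intDegree_mul ha hb]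
  norm_cast

theorem degK_prod {ι : Type*} (s : Finset ι) (f : ι → RatFunc k) :
    degK (∏ i ∈ s, f i) = ∑ i ∈ s, degK (f i) := by
  classical
  induction s using Finset.induction with
  | empty => simp [degK_one]
  | insert a s h ih => simp [prod_insert h, sum_insert h, degK_mul, ih]

theorem degK_add_le (a b : RatFunc k) : degK (a + b) ≤ max (degK a) (degK b) := by
  by_cases hab : a + b = 0
  · simp [degK, hab]
  by_cases hb : b = 0
  · simp [hb]
  by_cases ha : a = 0
  · simp [ha]
  simp only [degK, ha, hb, hab, if_false]
  exact_mod_cast RatFunc.intDegree_add_le hb hab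

theorem degK_sum_le {ι : Type*} (s : Finset ι) (f : ι → RatFunc k) :
    degK (∑ i ∈ s, f i) ≤ s.sup fun i => degK (f i) := by
  classical
  induction s using Finset.induction with
  | empty => simp [degK]
  | insert a s h ih =>
    rw [sum_insert h, sup_insert]
    exact (degK_add_le _ _).trans (max_le_max le_rfl ih)

end degK

theorem WithBot.le_coe_sub_of_add_coe_le {x : WithBot ℝ} {a b : ℝ} (h : x + a ≤ b) :
    x ≤ ((b - a : ℝ) : WithBot ℝ) := by
  induction x using WithBot.recBotCoe with
  | bot => exact bot_le
  | coe x =>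
    norm_cast at h ⊢
    linarith

theorem degK_det_le {k : Type*} [Field k] {ι : Type*} [Fintype ι] [DecidableEq ι]
    (T : Matrix ι ι (RatFunc k)) (c c' : ι → ℝ)
    (hT : ∀ i j, degK (T i j) ≤ ((c i - c' j : ℝ) : WithBot ℝ)) :
    degK T.det ≤ (((∑ i, c i) - ∑ i, c' i : ℝ) : WithBot ℝ) := by
  rw [Matrix.det_apply']
  refine (degK_sum_le _ _).trans (Finset.sup_le fun σ _ => ?_)
  rw [degK_mul, degK_intCast_units, zero_add, degK_prod]
  calc ∑ i, degK (T (σ i) i) ≤ ∑ i, ((c (σ i) - c' i : ℝ) : WithBot ℝ) :=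
        sum_le_sum fun i _ => hT (σ i) i
    _ = (((∑ i, c i) - ∑ i, c' i : ℝ) : WithBot ℝ) := by
        rw [← WithBot.coe_sum, sum_sub_distrib, Equiv.sum_comp σ c]

theorem degK_coeff_add_le_of_reduced {k : Type*} [Field k] {ι : Type*} [Fintype ι]
    {E : Type*} [AddCommGroup E] [Module (RatFunc k) E] {N : E → WithBot ℝ} {b : ι → E}
    (hred : ∀ a : ι → RatFunc k, N (∑ i, a i • b i) = univ.sup fun i => degK (a i) + N (b i))
    (a : ι → RatFunc k) (j : ι) :
    degK (a j) + N (b j) ≤ N (∑ i, a i • b i) :=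
  hred a ▸ le_sup (f := fun i => degK (a i) + N (b i)) (mem_univ j)

theorem stmt15_general {k : Type*} [Field k] {E : Type*} [AddCommGroup E]
    [Module (RatFunc k) E]
    (N : E → WithBot ℝ)
    (n : ℕ) (b b' : Fin n → E)
    (hred' : ∀ a : Fin n → RatFunc k,
      N (∑ i, a i • b' i) = Finset.univ.sup (fun i => degK (a i) + N (b' i)))
    (r r' : Fin n → ℝ)
    (hr : ∀ i, N (b i) = ((r i : ℝ) : WithBot ℝ))
    (hr' : ∀ i, N (b' i) = ((r' i : ℝ) : WithBot ℝ))
    (T : Matrix (Fin n) (Fin n) (RatFunc k))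
    (hT : ∀ i, b i = ∑ j, T i j • b' j) :
    degK T.det ≤ (((∑ i, r i) - (∑ i, r' i) : ℝ) : WithBot ℝ) := by
  refine degK_det_le T r r' fun i j => WithBot.le_coe_sub_of_add_coe_le ?_
  rw [← hr', ← hr, hT]
  exact degK_coeff_add_le_of_reduced hred' (T i) j

/-- (Hadamard's inequality.) For a basis `B = (b₁,…,b_n)` of a normed
space `E` over `K = k(t)` with transition matrix `T` to an orthonormal basis
`B' = (b'₁,…,b'_n)`, one has `|d(B)| = deg (det T) ≤ vol(B) - vol(E)`. -/
theorem stmt15 {k : Type*} [Field k] {E : Type*} [AddCommGroup E]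
    [Module (RatFunc k) E] [Module (Polynomial k) E] [Module k E]
    [IsScalarTower (Polynomial k) (RatFunc k) E] [IsScalarTower k (RatFunc k) E]
    (N : E → WithBot ℝ)
    (hadd : ∀ x y : E, N (x + y) ≤ max (N x) (N y))
    (hsmul : ∀ (a : RatFunc k) (x : E), N (a • x) = degK a + N x)
    (hzero : ∀ x : E, N x = ⊥ ↔ x = 0)
    (hlat : ∃ s : Finset E, Submodule.span (RatFunc k) (s : Set E) = ⊤ ∧
      ∀ r : ℝ, ∃ S : Finset E,
        {x : E | x ∈ Submodule.span (Polynomial k) (s : Set E) ∧ N x ≤ (r : ℝ)} ⊆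
          (Submodule.span k (S : Set E) : Set E))
    (n : ℕ) (b b' : Fin n → E)
    (hbasis : LinearIndependent (RatFunc k) b ∧
      Submodule.span (RatFunc k) (Set.range b) = ⊤)
    (hred' : ∀ a : Fin n → RatFunc k,
      N (∑ i, a i • b' i) = Finset.univ.sup (fun i => degK (a i) + N (b' i)))
    (r r' : Fin n → ℝ)
    (hr : ∀ i, N (b i) = ((r i : ℝ) : WithBot ℝ))
    (hr' : ∀ i, N (b' i) = ((r' i : ℝ) : WithBot ℝ))
    (horth : ∀ i, -1 < r' i ∧ r' i ≤ 0)
    (T : Matrix (Fin n) (Fin n) (RatFunc k))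
    (hT : ∀ i, b i = ∑ j, T i j • b' j) :
    degK T.det ≤ (((∑ i, r i) - (∑ i, r' i) : ℝ) : WithBot ℝ) :=
  stmt15_general N n b b' hred' r r' hr hr' T hT
end
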